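/- Let N, j, n be nonnegative integers with j ≤ N. The number of partitions π with all parts ≤ N satisfying O(π) = n and γ(π) = j equals the number of 2-color partitions (ρ, σ) of n (ρ red, σ green) such that ρ has exactly j parts and the largest part of σ is at most N − j. -/

import Mathlib

/-- Sum of `f` over the entries of a list at even 0-based positions, i.e. over the
odd-indexed parts `λ1, λ3, λ5, …` of a partition `(λ1, λ2, λ3, …)`. -/
def sumAlt (f : ℕ → ℕ) : List ℕ → ℕ
  | [] => 0
  | [a] => f a
  | a :: _ :: l => f a + sumAlt f l

/-- `O(π) = λ1 + λ3 + λ5 + ⋯`, the sum of the odd-indexed parts. -/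
def Osum (l : List ℕ) : ℕ := sumAlt id l

/-- `E(π) = λ2 + λ4 + λ6 + ⋯`, the sum of the even-indexed parts. -/
def Esum (l : List ℕ) : ℕ := sumAlt id l.tail

/-- `γ(π) = λ1 − λ2 + λ3 − λ4 + ⋯ = O(π) − E(π)`, the alternating sum of the parts.
For a weakly decreasing list we have `Osum l ≥ Esum l`, so natural subtraction is exact. -/
def gammaSum (l : List ℕ) : ℕ := Osum l - Esum l

/-- `⌈O⌉(π) = ∑ ⌈λ_{2i−1}/2⌉`. -/
def ceilO (l : List ℕ) : ℕ := sumAlt (fun a => (a + 1) / 2) l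

/-- `⌊O⌋(π) = ∑ ⌊λ_{2i−1}/2⌋`. -/
def floorO (l : List ℕ) : ℕ := sumAlt (fun a => a / 2) l

/-- `⌈E⌉(π) = ∑ ⌈λ_{2i}/2⌉`. -/
def ceilE (l : List ℕ) : ℕ := sumAlt (fun a => (a + 1) / 2) l.tail

/-- `⌊E⌋(π) = ∑ ⌊λ_{2i}/2⌋`. -/
def floorE (l : List ℕ) : ℕ := sumAlt (fun a => a / 2) l.tail

/-- A partition: a weakly decreasing finite list of positive integers. -/
def IsPartition (l : List ℕ) : Prop := l.Pairwise (· ≥ ·) ∧ ∀ x ∈ l, 0 < x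

/-- A partition into distinct parts: a strictly decreasing finite list of positive integers. -/
def IsDistinctPartition (l : List ℕ) : Prop := l.Pairwise (· > ·) ∧ ∀ x ∈ l, 0 < x

/-- The Gaussian binomial coefficient `[n choose k]_q` as a polynomial in `q`
(defined by the q-Pascal recurrence; it equals `(q;q)_n / ((q;q)_k (q;q)_{n−k})`). -/
noncomputable def qbinom : ℕ → ℕ → Polynomial ℤ
  | _, 0 => 1
  | 0, _ + 1 => 0
  | n + 1, k + 1 => qbinom n k + Polynomial.X ^ (k + 1) * qbinom n (k + 1)

/-!
Cut a partition `π` into the pairs `(λ₁, λ₂), (λ₃, λ₄), …`, padding with a zero part. The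
bijection sends `π` to the pair `(ρ, σ)` with `λ₂ᵢ₋₁ = σᵢ + ρ'ᵢ` and `λ₂ᵢ = σᵢ + ρ'ᵢ₊₁`, where `ρ'`
is the conjugate of `ρ`; equivalently, `ρ` has `λ₂ᵢ₋₁ − λ₂ᵢ` parts equal to `i`. Then `ρ` has
`γ(π)` parts, `|ρ| + |σ| = O(π)`, and the largest part of `π` is `σ₁ + ℓ(ρ)`, which turns the bound
`λ₁ ≤ N` into `σ₁ ≤ N − j`. Both directions work one pair at a time: the pair `(a, b)` on top of
a partition with image `(ρ, σ)` adds to `ρ` a first column of height `ℓ(ρ) + a − b` and to `σ` the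
part `b − ℓ(ρ)`; conversely, removing the first column of `ρ` and the largest part of `σ`
recovers the image of the rest.
-/

namespace List

variable {l : List ℕ} {x N : ℕ}

theorem le_headI_of_pairwise_ge (hl : l.Pairwise (· ≥ ·)) (hx : x ∈ l) : x ≤ l.headI := by
  cases l with
  | nil => simp at hx
  | cons a t =>
    rcases mem_cons.mp hx with rfl | hx
    · exact le_rfl
    · exact (pairwise_cons.mp hl).1 x hx

theorem forall_le_iff_headI_le (hl : l.Pairwise (· ≥ ·)) :
    (∀ x ∈ l, x ≤ N) ↔ l.headI ≤ N := by
  refine ⟨fun h => ?_, fun h x hx => (le_headI_of_pairwise_ge hl hx).trans h⟩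
  cases l with
  | nil => exact Nat.zero_le N
  | cons a t => exact h a mem_cons_self

theorem headI_tail_le (hl : l.Pairwise (· ≥ ·)) : l.tail.headI ≤ l.headI := by
  rcases l with _ | ⟨a, _ | ⟨b, t⟩⟩
  · exact le_rfl
  · exact Nat.zero_le a
  · exact (pairwise_cons.mp hl).1 b mem_cons_self

end List

open List

theorem isPartition_nil : IsPartition [] :=
  ⟨Pairwise.nil, fun _ h => absurd h not_mem_nil⟩

theorem isPartition_cons_iff {x : ℕ} {l : List ℕ} :
    IsPartition (x :: l) ↔ 0 < x ∧ l.headI ≤ x ∧ IsPartition l := by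
  unfold IsPartition
  constructor
  · rintro ⟨hs, hp⟩
    exact ⟨hp x mem_cons_self, (forall_le_iff_headI_le (pairwise_cons.mp hs).2).mp
      (pairwise_cons.mp hs).1, (pairwise_cons.mp hs).2, fun y hy => hp y (mem_cons_of_mem x hy)⟩
  · rintro ⟨hx, hlx, hs, hp⟩
    exact ⟨pairwise_cons.mpr ⟨(forall_le_iff_headI_le hs).mpr hlx, hs⟩,
      forall_mem_cons.mpr ⟨hx, hp⟩⟩

theorem IsPartition.tail {l : List ℕ} (hl : IsPartition l) : IsPartition l.tail :=
  ⟨hl.1.tail, fun x hx => hl.2 x (mem_of_mem_tail hx)⟩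

theorem IsPartition.eq_nil_of_headI_eq_zero {l : List ℕ} (hl : IsPartition l)
    (h : l.headI = 0) : l = [] := by
  cases l with
  | nil => rfl
  | cons a t => exact absurd h (isPartition_cons_iff.mp hl).1.ne'

def consPos (x : ℕ) (l : List ℕ) : List ℕ := if x = 0 then l else x :: l

section consPos

variable {x : ℕ} {l : List ℕ}

theorem sum_consPos : (consPos x l).sum = x + l.sum := by
  unfold consPos; split <;> simp [*]

theorem IsPartition.consPos (hl : IsPartition l) (hx : l.headI ≤ x) :
    IsPartition (consPos x l) := by
  unfold _root_.consPos; split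
  · exact hl
  · exact isPartition_cons_iff.mpr ⟨Nat.pos_of_ne_zero ‹_›, hx, hl⟩

theorem headI_consPos (hl : IsPartition l) (hx : l.headI ≤ x) : (consPos x l).headI = x := by
  unfold consPos; split
  · subst x; rw [hl.eq_nil_of_headI_eq_zero (Nat.le_zero.mp hx)]; rfl
  · rfl

theorem tail_consPos (hl : IsPartition l) (hx : l.headI ≤ x) : (consPos x l).tail = l := by
  unfold consPos; split
  · subst x; rw [hl.eq_nil_of_headI_eq_zero (Nat.le_zero.mp hx)]; rfl
  · rfl

theorem consPos_headI_tail (hl : IsPartition l) : consPos l.headI l.tail = l := by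
  cases l with
  | nil => rfl
  | cons a t => exact if_neg (isPartition_cons_iff.mp hl).1.ne'

end consPos

def addColumn (k : ℕ) (ρ : List ℕ) : List ℕ := ρ.map (· + 1) ++ replicate k 1

def dropFirstColumn (ρ : List ℕ) : List ℕ := (ρ.map (· - 1)).filter (0 < ·)

section columns

variable {k : ℕ} {ρ : List ℕ}

theorem length_addColumn : (addColumn k ρ).length = ρ.length + k := by
  simp [addColumn]

theorem sum_addColumn : (addColumn k ρ).sum = ρ.sum + ρ.length + k := by
  induction ρ with
  | nil => simp [addColumn]
  | cons a t ih =>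
    simp only [addColumn, map_cons, cons_append, sum_cons, length_cons] at ih ⊢
    omega

theorem IsPartition.addColumn (hρ : IsPartition ρ) : IsPartition (addColumn k ρ) := by
  refine ⟨pairwise_append.mpr ⟨hρ.1.map _ fun a b h => by omega, ?_, ?_⟩, ?_⟩
  · exact pairwise_replicate.mpr (Or.inr le_rfl)
  · intro a ha b hb
    obtain ⟨c, -, rfl⟩ := mem_map.mp ha
    rw [eq_of_mem_replicate hb]
    omega
  · intro a ha
    rcases mem_append.mp ha with ha | ha
    · obtain ⟨b, -, rfl⟩ := mem_map.mp ha
      omega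
    · rw [eq_of_mem_replicate ha]
      exact Nat.one_pos

theorem dropFirstColumn_addColumn (hρ : ∀ x ∈ ρ, 0 < x) : dropFirstColumn (addColumn k ρ) = ρ := by
  simpa [dropFirstColumn, addColumn, filter_append, Function.comp_def] using hρ

theorem IsPartition.dropFirstColumn (hρ : IsPartition ρ) : IsPartition (dropFirstColumn ρ) :=
  ⟨(hρ.1.map _ fun a b h => by omega).filter _, by simp [_root_.dropFirstColumn]⟩

theorem addColumn_dropFirstColumn (hρ : IsPartition ρ) :
    addColumn (ρ.length - (dropFirstColumn ρ).length) (dropFirstColumn ρ) = ρ := by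
  induction ρ with
  | nil => rfl
  | cons x t ih =>
    obtain ⟨hx, htx, ht⟩ := isPartition_cons_iff.mp hρ
    by_cases hx1 : x = 1
    · subst hx1
      have ht1 : ∀ y ∈ t, y = 1 := fun y hy =>
        le_antisymm ((le_headI_of_pairwise_ge ht.1 hy).trans htx) (ht.2 y hy)
      have hdrop : dropFirstColumn (1 :: t) = [] := by
        simpa [dropFirstColumn] using fun y hy => by rw [ht1 y hy]; rfl
      rw [hdrop, eq_replicate_of_mem ht1]
      simp [addColumn, replicate_succ]
    · have hdrop : dropFirstColumn (x :: t) = (x - 1) :: dropFirstColumn t := by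
        simp [dropFirstColumn, show 0 < x - 1 by omega]
      rw [hdrop]
      conv_rhs => rw [← ih ht]
      simp only [addColumn, length_cons, map_cons, cons_append, Nat.add_sub_add_right,
        Nat.sub_add_cancel hx]

theorem length_dropFirstColumn_le : (dropFirstColumn ρ).length ≤ ρ.length :=
  (length_filter_le _ _).trans (length_map _).le

theorem length_add_sum_dropFirstColumn_le :
    (dropFirstColumn ρ).length + (dropFirstColumn ρ).sum ≤ ρ.sum := by
  induction ρ with
  | nil => simp [dropFirstColumn]
  | cons a t ih =>
    by_cases ha : 0 < a - 1 <;> simp_all [dropFirstColumn] <;> omega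

end columns

theorem Osum_cons (a : ℕ) (t : List ℕ) : Osum (a :: t) = a + Osum t.tail := by
  rcases t with _ | ⟨b, _ | ⟨c, t⟩⟩ <;> rfl

theorem Esum_cons (a : ℕ) (t : List ℕ) : Esum (a :: t) = t.headI + Esum t.tail := by
  rcases t with _ | ⟨b, _ | ⟨c, t⟩⟩ <;> rfl

theorem Esum_le_Osum {l : List ℕ} (hl : l.Pairwise (· ≥ ·)) : Esum l ≤ Osum l := by
  induction l using sumAlt.induct with
  | case1 => exact le_rfl
  | case2 a => exact Nat.zero_le a
  | case3 a b l ih =>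
    have hab : b ≤ a := (pairwise_cons.mp hl).1 b mem_cons_self
    have := ih hl.tail.tail
    rw [Osum_cons, Esum_cons]
    exact Nat.add_le_add hab this

theorem gammaSum_cons {a : ℕ} {t : List ℕ} (h : (a :: t).Pairwise (· ≥ ·)) :
    gammaSum (a :: t) = a - t.headI + gammaSum t.tail := by
  have hta : t.headI ≤ a := headI_tail_le h
  have : Esum t.tail ≤ Osum t.tail := Esum_le_Osum h.tail.tail
  unfold gammaSum
  rw [Osum_cons, Esum_cons]
  omega

def toTwoColor : List ℕ → List ℕ × List ℕ
  | [] => ([], [])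
  | a :: t =>
    (addColumn (a - t.headI) (toTwoColor t.tail).1,
      consPos (t.headI - (toTwoColor t.tail).1.length) (toTwoColor t.tail).2)
termination_by l => l.length

theorem toTwoColor_nil : toTwoColor [] = ([], []) := by
  rw [toTwoColor]

theorem isPartition_fst_toTwoColor (π : List ℕ) : IsPartition (toTwoColor π).1 := by
  induction π using toTwoColor.induct with
  | case1 => rw [toTwoColor_nil]; exact isPartition_nil
  | case2 a t ih => rw [toTwoColor]; exact ih.addColumn

theorem length_fst_toTwoColor {π : List ℕ} (hπ : π.Pairwise (· ≥ ·)) :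
    (toTwoColor π).1.length = gammaSum π := by
  induction π using toTwoColor.induct with
  | case1 => rw [toTwoColor_nil]; rfl
  | case2 a t ih =>
    rw [toTwoColor, length_addColumn, ih hπ.tail.tail, gammaSum_cons hπ, Nat.add_comm]

theorem isPartition_snd_toTwoColor_and_headI {π : List ℕ} (hπ : IsPartition π) :
    IsPartition (toTwoColor π).2 ∧
      π.headI = (toTwoColor π).2.headI + (toTwoColor π).1.length := by
  induction π using toTwoColor.induct with
  | case1 => rw [toTwoColor_nil]; exact ⟨isPartition_nil, rfl⟩
  | case2 a t ih =>
    obtain ⟨-, hta, ht⟩ := isPartition_cons_iff.mp hπ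
    obtain ⟨hσ, hhead⟩ := ih ht.tail
    have htt := headI_tail_le ht.1
    have hσb : (toTwoColor t.tail).2.headI ≤ t.headI - (toTwoColor t.tail).1.length := by omega
    rw [toTwoColor, headI_cons, length_addColumn, headI_consPos hσ hσb]
    exact ⟨hσ.consPos hσb, by omega⟩

theorem sum_toTwoColor {π : List ℕ} (hπ : IsPartition π) :
    (toTwoColor π).1.sum + (toTwoColor π).2.sum = Osum π := by
  induction π using toTwoColor.induct with
  | case1 => rw [toTwoColor_nil]; rfl
  | case2 a t ih =>
    obtain ⟨-, hta, ht⟩ := isPartition_cons_iff.mp hπ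
    have hsum := ih ht.tail
    have hhead := (isPartition_snd_toTwoColor_and_headI ht.tail).2
    have htt := headI_tail_le ht.1
    rw [toTwoColor, sum_addColumn, sum_consPos, Osum_cons]
    omega

def ofTwoColor (p : List ℕ × List ℕ) : List ℕ :=
  if p.1 = [] ∧ p.2 = [] then [] else
    (p.2.headI + p.1.length) ::
      consPos (p.2.headI + (dropFirstColumn p.1).length)
        (ofTwoColor (dropFirstColumn p.1, p.2.tail))
termination_by p.1.length + p.1.sum + p.2.length
decreasing_by
  rcases p with ⟨_ | ⟨a, ρ⟩, σ⟩
  · cases σ <;> simp_all [dropFirstColumn]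
  · have := length_add_sum_dropFirstColumn_le (ρ := a :: ρ)
    simp only [length_cons, length_tail]
    omega

theorem headI_ofTwoColor (p : List ℕ × List ℕ) : (ofTwoColor p).headI = p.2.headI + p.1.length := by
  rw [ofTwoColor]
  split
  · next h => rw [h.1, h.2]; rfl
  · rfl

theorem headI_ofTwoColor_dropFirstColumn_le (p : List ℕ × List ℕ) (hσ : p.2.Pairwise (· ≥ ·)) :
    (ofTwoColor (dropFirstColumn p.1, p.2.tail)).headI ≤
      p.2.headI + (dropFirstColumn p.1).length := by
  rw [headI_ofTwoColor]
  exact Nat.add_le_add_right (headI_tail_le hσ) _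

theorem isPartition_ofTwoColor {p : List ℕ × List ℕ} (hρ : IsPartition p.1) (hσ : IsPartition p.2) :
    IsPartition (ofTwoColor p) := by
  induction p using ofTwoColor.induct with
  | case1 p h => rw [ofTwoColor, if_pos h]; exact isPartition_nil
  | case2 p h ih =>
    have hrec := ih hρ.dropFirstColumn hσ.tail
    have hhead := headI_ofTwoColor_dropFirstColumn_le p hσ.1
    have hpos : 0 < p.2.headI + p.1.length := by
      rcases p with ⟨_ | ⟨a, ρ⟩, _ | ⟨c, σ⟩⟩
      · exact absurd ⟨rfl, rfl⟩ h
      · exact Nat.add_pos_left (isPartition_cons_iff.mp hσ).1 _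
      all_goals simp
    rw [ofTwoColor, if_neg h, isPartition_cons_iff, headI_consPos hrec hhead]
    exact ⟨hpos, Nat.add_le_add_left length_dropFirstColumn_le _, hrec.consPos hhead⟩

theorem toTwoColor_ofTwoColor {p : List ℕ × List ℕ} (hρ : IsPartition p.1) (hσ : IsPartition p.2) :
    toTwoColor (ofTwoColor p) = p := by
  induction p using ofTwoColor.induct with
  | case1 p h =>
    obtain ⟨⟨ρ, σ⟩, ⟨rfl, rfl⟩⟩ := p, h
    rw [ofTwoColor, if_pos ⟨rfl, rfl⟩, toTwoColor_nil]
  | case2 p h ih =>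
    have hrec : IsPartition (ofTwoColor (dropFirstColumn p.1, p.2.tail)) :=
      isPartition_ofTwoColor hρ.dropFirstColumn hσ.tail
    have hhead := headI_ofTwoColor_dropFirstColumn_le p hσ.1
    rw [ofTwoColor, if_neg h, toTwoColor, headI_consPos hrec hhead, tail_consPos hrec hhead,
      ih hρ.dropFirstColumn hσ.tail]
    simp only [Nat.add_sub_add_left, Nat.add_sub_cancel, addColumn_dropFirstColumn hρ,
      consPos_headI_tail hσ]

theorem ofTwoColor_toTwoColor {π : List ℕ} (hπ : IsPartition π) :
    ofTwoColor (toTwoColor π) = π := by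
  induction π using toTwoColor.induct with
  | case1 => rw [toTwoColor_nil, ofTwoColor, if_pos ⟨rfl, rfl⟩]
  | case2 a t ih =>
    obtain ⟨ha, hta, ht⟩ := isPartition_cons_iff.mp hπ
    obtain ⟨hσ, hhead⟩ := isPartition_snd_toTwoColor_and_headI ht.tail
    have htt := headI_tail_le ht.1
    have hσb : (toTwoColor t.tail).2.headI ≤ t.headI - (toTwoColor t.tail).1.length := by omega
    have hne : ¬(addColumn (a - t.headI) (toTwoColor t.tail).1 = [] ∧
        consPos (t.headI - (toTwoColor t.tail).1.length) (toTwoColor t.tail).2 = []) := by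
      rintro ⟨h1, h2⟩
      have h1 := congrArg length h1
      have h2 := congrArg headI h2
      rw [length_addColumn] at h1
      rw [headI_consPos hσ hσb] at h2
      simp only [length_nil, headI_nil, Nat.default_eq_zero] at h1 h2
      omega
    rw [toTwoColor, ofTwoColor, if_neg hne]
    simp only [headI_consPos hσ hσb, tail_consPos hσ hσb, length_addColumn,
      dropFirstColumn_addColumn (isPartition_fst_toTwoColor t.tail).2]
    have hfst : t.headI - (toTwoColor t.tail).1.length +
        ((toTwoColor t.tail).1.length + (a - t.headI)) = a := by
      omega
    rw [hfst, Nat.sub_add_cancel (by omega), ih ht.tail, consPos_headI_tail ht]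

theorem toTwoColor_constraints_iff {π : List ℕ} (hπ : IsPartition π) {N j n : ℕ} (hj : j ≤ N) :
    ((∀ x ∈ π, x ≤ N) ∧ Osum π = n ∧ gammaSum π = j) ↔
      ((toTwoColor π).1.length = j ∧ (∀ x ∈ (toTwoColor π).2, x ≤ N - j) ∧
        (toTwoColor π).1.sum + (toTwoColor π).2.sum = n) := by
  obtain ⟨hσ, hhead⟩ := isPartition_snd_toTwoColor_and_headI hπ
  rw [forall_le_iff_headI_le hπ.1, forall_le_iff_headI_le hσ.1, hhead, length_fst_toTwoColor hπ.1,
    sum_toTwoColor hπ]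
  constructor <;> intro h <;> omega

/-- **Refined Uncu–Andrews–Paule theorem.** For `j ≤ N`, the number of partitions with parts
`≤ N`, `O(π) = n` and `γ(π) = j` equals the number of 2-color partitions `(ρ, σ)` of `n`
(`ρ` red, `σ` green) where `ρ` has exactly `j` parts and every part of `σ` is `≤ N − j`. -/
theorem refined_uncu_andrews_paule (N j n : ℕ) (hj : j ≤ N) :
    Nat.card {l : List ℕ //
        IsPartition l ∧ (∀ x ∈ l, x ≤ N) ∧ Osum l = n ∧ gammaSum l = j} =
      Nat.card {p : List ℕ × List ℕ //
        IsPartition p.1 ∧ IsPartition p.2 ∧ p.1.length = j ∧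
          (∀ x ∈ p.2, x ≤ N - j) ∧ p.1.sum + p.2.sum = n} :=
  Nat.card_congr
    { toFun := fun π => ⟨toTwoColor π, isPartition_fst_toTwoColor π,
        (isPartition_snd_toTwoColor_and_headI π.2.1).1,
        (toTwoColor_constraints_iff π.2.1 hj).1 π.2.2⟩
      invFun := fun p => ⟨ofTwoColor p, isPartition_ofTwoColor p.2.1 p.2.2.1,
        (toTwoColor_constraints_iff (isPartition_ofTwoColor p.2.1 p.2.2.1) hj).2
          (by rw [toTwoColor_ofTwoColor p.2.1 p.2.2.1]; exact p.2.2.2)⟩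
      left_inv := fun π => Subtype.ext (ofTwoColor_toTwoColor π.2.1)
      right_inv := fun p => Subtype.ext (toTwoColor_ofTwoColor p.2.1 p.2.2.1) }
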